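/- arXiv:2312.15532 — 7 statements merged into one kernel-verified Lean document; each statement's English description precedes it below -/
import Mathlib

section
/- Let α_1,...,α_N > 0 with |α| = Σ_A α_A and ρ_a = α_a / |α|. Then in gl(N): exp(−Σ_{c=1}^{N−1} E_{cN}) · [ Σ_{A,B=1}^{N} α_A (E_{BA} − E_{BB}) ] · exp(Σ_{c=1}^{N−1} E_{cN}) = |α| Σ_{a=1}^{N−1} ( ρ_a E_{Na} − E_{aa} ). -/
open scoped BigOperators

open NormedSpace Nat

private lemma pow_expand_aux {A : Type*} [Ring A] (X Y Z1 Z2 : A)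
    (h1 : Y * X = X * Y - Z1) (h2 : Z1 * X = X * Z1 - Z2) (h3 : Z2 * X = X * Z2) :
    ∀ n : ℕ, Y * X ^ (n + 2)
      = X ^ (n + 2) * Y - (n + 2) • (X ^ (n + 1) * Z1) + ((n + 2).choose 2) • (X ^ n * Z2) := by
  intro n
  induction n with
  | zero =>
    show Y * X ^ 2 = X ^ 2 * Y - 2 • (X ^ 1 * Z1) + (Nat.choose 2 2) • (X ^ 0 * Z2)
    have e : Y * X ^ 2 = (Y * X) * X := by rw [pow_two, mul_assoc]
    rw [e, h1, sub_mul, mul_assoc, h1, h2]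
    simp only [pow_two, pow_one, pow_zero, one_mul, two_smul, Nat.choose_self, one_smul,
      mul_sub, mul_assoc]
    abel
  | succ m ih =>
    have e : Y * X ^ (m + 1 + 2) = (Y * X ^ (m + 2)) * X := by
      rw [mul_assoc, ← pow_succ]
    have p1 : X ^ (m + 2) * (X * Y) = X ^ (m + 1 + 2) * Y := by
      rw [← mul_assoc, ← pow_succ]
    have p2 : X ^ (m + 1) * (X * Z1) = X ^ (m + 2) * Z1 := by
      rw [← mul_assoc, ← pow_succ]
    have p3 : X ^ m * (X * Z2) = X ^ (m + 1) * Z2 := by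
      rw [← mul_assoc, ← pow_succ]
    have hc : (m + 1 + 2).choose 2 = (m + 2) + (m + 2).choose 2 := by
      show (m + 2 + 1).choose (1 + 1) = _
      rw [Nat.choose_succ_succ, Nat.choose_one_right]
    rw [e, ih, add_mul, sub_mul, smul_mul_assoc, smul_mul_assoc,
      mul_assoc, mul_assoc, mul_assoc, h1, h2, h3, mul_sub, mul_sub, p1, p2, p3, hc]
    rw [smul_sub]
    simp only [add_smul, one_smul, show m + 1 + 2 = m + 2 + 1 from rfl, succ_nsmul]
    abel

private lemma mul_exp_eq_aux {A : Type*} [NormedRing A] [NormedAlgebra ℝ A] [CompleteSpace A]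
    (X Y Z1 Z2 : A)
    (h1 : Y * X = X * Y - Z1) (h2 : Z1 * X = X * Z1 - Z2) (h3 : Z2 * X = X * Z2) :
    Y * exp X = exp X * (Y - Z1 + (2⁻¹ : ℝ) • Z2) := by
  have hsum : Summable fun n : ℕ => ((n ! : ℝ)⁻¹) • X ^ n := expSeries_summable' (𝕂 := ℝ) X
  have hmapR : ∀ (W : A), Summable fun n : ℕ => ((n ! : ℝ)⁻¹) • (X ^ n * W) := by
    intro W
    have h := hsum.mul_right W
    simpa [smul_mul_assoc] using h
  have htsumR : ∀ (W : A), (∑' n : ℕ, ((n ! : ℝ)⁻¹) • (X ^ n * W)) = exp X * W := by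
    intro W
    rw [exp_eq_tsum ℝ, ← hsum.tsum_mul_right W]
    simp [smul_mul_assoc]
  set f1 : ℕ → A := fun n => if n = 0 then 0 else (((n-1) ! : ℝ)⁻¹) • (X ^ (n-1) * Z1) with hf1
  set f2 : ℕ → A := fun n =>
    if n < 2 then 0 else (((n-2) ! : ℝ)⁻¹) • (X ^ (n-2) * ((2⁻¹ : ℝ) • Z2)) with hf2
  have hsf1 : Summable f1 := by
    rw [← summable_nat_add_iff 1]
    simpa [hf1] using hmapR Z1
  have hsf2 : Summable f2 := by
    rw [← summable_nat_add_iff 2]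
    simpa [hf2, mul_smul_comm, smul_comm ((2:ℝ)⁻¹)] using (hmapR Z2).const_smul (2⁻¹ : ℝ)
  have htf1 : ∑' n, f1 n = exp X * Z1 := by
    rw [Summable.tsum_eq_zero_add hsf1]
    simpa [hf1] using htsumR Z1
  have htf2 : ∑' n, f2 n = exp X * ((2⁻¹ : ℝ) • Z2) := by
    rw [Summable.tsum_eq_zero_add hsf2, Summable.tsum_eq_zero_add ((summable_nat_add_iff 1).mpr hsf2)]
    simpa [hf2] using htsumR ((2⁻¹ : ℝ) • Z2)
  have hpt : ∀ n : ℕ, ((n ! : ℝ)⁻¹) • (Y * X ^ n)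
      = ((n ! : ℝ)⁻¹) • (X ^ n * Y) - f1 n + f2 n := by
    intro n
    match n with
    | 0 => simp [hf1, hf2]
    | 1 =>
      simp only [hf1, hf2]
      norm_num [h1, smul_sub]
    | (m+2) =>
      rw [pow_expand_aux X Y Z1 Z2 h1 h2 h3 m]
      have c1 : ((m+2)! : ℝ)⁻¹ * (m+2 : ℕ) = ((m+1)! : ℝ)⁻¹ := by
        rw [show (m+2)! = (m+2) * (m+1)! from rfl]
        have h1' : ((m+1)! : ℝ) ≠ 0 := by positivity
        push_cast
        field_simp
      have c2 : ((m+2)! : ℝ)⁻¹ * ((m+2).choose 2 : ℕ) = (m ! : ℝ)⁻¹ * 2⁻¹ := by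
        have h := Nat.choose_mul_factorial_mul_factorial (show 2 ≤ m + 2 by omega)
        have h' : ((m+2).choose 2 : ℝ) * 2 * (m ! : ℝ) = ((m+2)! : ℝ) := by
          exact_mod_cast congrArg (Nat.cast : ℕ → ℝ) (by simpa [Nat.factorial] using h)
        have hm : (m ! : ℝ) ≠ 0 := by positivity
        have hm2 : ((m+2)! : ℝ) ≠ 0 := by positivity
        field_simp
        linarith [h']
      simp only [hf1, hf2]
      rw [if_neg (by omega : ¬ m + 2 = 0), if_neg (by omega : ¬ m + 2 < 2),
        show m + 2 - 1 = m + 1 from rfl, show m + 2 - 2 = m from rfl,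
        smul_add, smul_sub, ← Nat.cast_smul_eq_nsmul ℝ (m+2),
        ← Nat.cast_smul_eq_nsmul ℝ ((m+2).choose 2), smul_smul, smul_smul, c1, c2]
      rw [mul_smul_comm, smul_smul]
  have hY : Y * exp X = ∑' n : ℕ, ((n ! : ℝ)⁻¹) • (Y * X ^ n) := by
    rw [exp_eq_tsum ℝ, ← hsum.tsum_mul_left Y]
    simp [mul_smul_comm]
  rw [hY]
  have heq : (fun n : ℕ => ((n ! : ℝ)⁻¹) • (Y * X ^ n))
      = fun n => (((n ! : ℝ)⁻¹) • (X ^ n * Y) - f1 n + f2 n) := funext hpt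
  rw [heq, Summable.tsum_add ((hmapR Y).sub hsf1) hsf2, Summable.tsum_sub (hmapR Y) hsf1, htsumR Y, htf1, htf2,
    mul_add, mul_sub]


/-- let `α_1,...,α_N > 0`, `|α| = Σ_A α_A` and `ρ_a = α_a/|α|`.  For
generators `E_{AB}` satisfying the `gl(N)` commutation relations (in a Banach algebra so
that the exponential makes sense),
`exp(−Σ_{c<N} E_{cN}) (Σ_{A,B} α_A (E_{BA} − E_{BB})) exp(Σ_{c<N} E_{cN})
   = |α| Σ_{a<N} (ρ_a E_{Na} − E_{aa})`.
Indices run over `Fin (N+1)`, the distinguished index `N` being `Fin.last N`. -/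
theorem hadamard_boundary (N : ℕ) {A : Type*} [NormedRing A] [NormedAlgebra ℝ A]
    [CompleteSpace A] (E : Fin (N + 1) → Fin (N + 1) → A)
    (hE : ∀ a b c d : Fin (N + 1),
      ⁅E a b, E c d⁆ = (if c = b then (1 : A) else 0) * E a d
        - (if a = d then (1 : A) else 0) * E c b)
    (α : Fin (N + 1) → ℝ) (hα : ∀ i, 0 < α i) :
    NormedSpace.exp (-(∑ c : Fin N, E c.castSucc (Fin.last N)))
        * (∑ A' : Fin (N + 1), ∑ B : Fin (N + 1), α A' • (E B A' - E B B))
        * NormedSpace.exp (∑ c : Fin N, E c.castSucc (Fin.last N))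
      = (∑ A' : Fin (N + 1), α A') •
          ∑ a : Fin N, ((α a.castSucc / ∑ A' : Fin (N + 1), α A') •
              E (Fin.last N) a.castSucc
            - E a.castSucc a.castSucc) := by
  have hE' : ∀ a b c d : Fin (N + 1),
      E a b * E c d - E c d * E a b = (if c = b then (1 : A) else 0) * E a d
        - (if a = d then (1 : A) else 0) * E c b := by
    intro a b c d
    have h := hE a b c d
    rwa [Ring.lie_def] at h
  set s := ∑ A' : Fin (N + 1), α A' with hs
  set X := ∑ c : Fin N, E c.castSucc (Fin.last N) with hX
  set Y := ∑ A' : Fin (N + 1), ∑ B : Fin (N + 1), α A' • (E B A' - E B B) with hY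
  set S := ∑ B : Fin (N + 1), E B (Fin.last N) with hS
  set T := ∑ c : Fin N, ∑ A' : Fin (N + 1), α A' • E c.castSucc A' with hT
  set P := ∑ c : Fin N, α c.castSucc with hP
  set Z1 := T - P • S with hZ1
  set Z2 := (-(2 * P)) • X with hZ2
  -- bracket with Y
  have hb1 : ∀ c : Fin N,
      E c.castSucc (Fin.last N) * Y - Y * E c.castSucc (Fin.last N)
      = (∑ A' : Fin (N + 1), α A' • E c.castSucc A') - α c.castSucc • S := by
    intro c
    rw [hY, hS, Finset.mul_sum, Finset.sum_mul, ← Finset.sum_sub_distrib]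
    have step : ∀ A' : Fin (N+1),
        E c.castSucc (Fin.last N) * (∑ B : Fin (N + 1), α A' • (E B A' - E B B))
          - (∑ B : Fin (N + 1), α A' • (E B A' - E B B)) * E c.castSucc (Fin.last N)
        = α A' • E c.castSucc A'
          - (if c.castSucc = A' then α A' • (∑ B : Fin (N + 1), E B (Fin.last N))
              else 0) := by
      intro A'
      rw [Finset.mul_sum, Finset.sum_mul, ← Finset.sum_sub_distrib]
      have step2 : ∀ B : Fin (N+1),
          E c.castSucc (Fin.last N) * (α A' • (E B A' - E B B))
            - (α A' • (E B A' - E B B)) * E c.castSucc (Fin.last N)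
          = α A' • (((if B = Fin.last N then (1:A) else 0) * E c.castSucc A'
              - (if c.castSucc = A' then (1:A) else 0) * E B (Fin.last N))
            - ((if B = Fin.last N then (1:A) else 0) * E c.castSucc B
              - (if c.castSucc = B then (1:A) else 0) * E B (Fin.last N))) := by
        intro B
        rw [mul_smul_comm, smul_mul_assoc, ← smul_sub,
          ← hE' c.castSucc (Fin.last N) B A', ← hE' c.castSucc (Fin.last N) B B]
        congr 1
        rw [mul_sub, sub_mul]
        abel
      rw [Finset.sum_congr rfl fun B _ => step2 B, ← Finset.smul_sum]
      simp only [Finset.sum_sub_distrib, Finset.sum_ite_eq, Finset.sum_ite_eq', Finset.mem_univ,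
        if_true, ite_mul, one_mul, zero_mul]
      by_cases hq : c.castSucc = A' <;> simp [hq, smul_sub]
    rw [Finset.sum_congr rfl fun A' _ => step A', Finset.sum_sub_distrib]
    congr 1
    simp [Finset.sum_ite_eq, Finset.mem_univ]
  -- bracket with T
  have hb2a : ∀ c : Fin N,
      E c.castSucc (Fin.last N) * T - T * E c.castSucc (Fin.last N)
      = -(α c.castSucc • X) := by
    intro c
    rw [hT, hX, Finset.mul_sum, Finset.sum_mul, ← Finset.sum_sub_distrib]
    have step : ∀ c' : Fin N,
        E c.castSucc (Fin.last N) * (∑ A' : Fin (N + 1), α A' • E c'.castSucc A')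
          - (∑ A' : Fin (N + 1), α A' • E c'.castSucc A') * E c.castSucc (Fin.last N)
        = -(α c.castSucc • E c'.castSucc (Fin.last N)) := by
      intro c'
      rw [Finset.mul_sum, Finset.sum_mul, ← Finset.sum_sub_distrib]
      have step2 : ∀ A' : Fin (N+1),
          E c.castSucc (Fin.last N) * (α A' • E c'.castSucc A')
            - (α A' • E c'.castSucc A') * E c.castSucc (Fin.last N)
          = α A' • ((if c'.castSucc = Fin.last N then (1:A) else 0) * E c.castSucc A'
              - (if c.castSucc = A' then (1:A) else 0) * E c'.castSucc (Fin.last N)) := by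
        intro A'
        rw [mul_smul_comm, smul_mul_assoc, ← smul_sub, ← hE']
      rw [Finset.sum_congr rfl fun A' _ => step2 A']
      simp [Fin.castSucc_lt_last c' |>.ne, Finset.sum_ite_eq, smul_smul]
    rw [Finset.sum_congr rfl fun c' _ => step c']
    simp [← Finset.smul_sum]
  -- bracket with S
  have hb2b : ∀ c : Fin N,
      E c.castSucc (Fin.last N) * S - S * E c.castSucc (Fin.last N)
      = E c.castSucc (Fin.last N) := by
    intro c
    rw [hS, Finset.mul_sum, Finset.sum_mul, ← Finset.sum_sub_distrib]
    have step2 : ∀ B : Fin (N+1),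
        E c.castSucc (Fin.last N) * E B (Fin.last N)
          - E B (Fin.last N) * E c.castSucc (Fin.last N)
        = (if B = Fin.last N then (1:A) else 0) * E c.castSucc (Fin.last N)
          - (if c.castSucc = Fin.last N then (1:A) else 0) * E B (Fin.last N) := by
      intro B
      rw [← hE']
    rw [Finset.sum_congr rfl fun B _ => step2 B]
    simp [Fin.castSucc_lt_last c |>.ne, Finset.sum_ite_eq']
  -- h1
  have hXY : X * Y - Y * X = Z1 := by
    rw [hZ1, hX, Finset.sum_mul, Finset.mul_sum, ← Finset.sum_sub_distrib,
      Finset.sum_congr rfl fun c _ => hb1 c, Finset.sum_sub_distrib, ← hT, ← Finset.sum_smul,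
      ← hP]
  have h1 : Y * X = X * Y - Z1 := by rw [← hXY]; abel
  -- h2
  have hXZ1 : X * Z1 - Z1 * X = Z2 := by
    have percl : ∀ c : Fin N,
        E c.castSucc (Fin.last N) * Z1 - Z1 * E c.castSucc (Fin.last N)
        = -(α c.castSucc • X) - P • E c.castSucc (Fin.last N) := by
      intro c
      have expand : E c.castSucc (Fin.last N) * Z1 - Z1 * E c.castSucc (Fin.last N)
          = (E c.castSucc (Fin.last N) * T - T * E c.castSucc (Fin.last N))
            - P • (E c.castSucc (Fin.last N) * S - S * E c.castSucc (Fin.last N)) := by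
        rw [hZ1]
        simp only [mul_sub, sub_mul, mul_smul_comm, smul_mul_assoc, smul_sub]
        abel
      rw [expand, hb2a c, hb2b c]
    rw [hZ2, hX, Finset.sum_mul, Finset.mul_sum, ← Finset.sum_sub_distrib,
      Finset.sum_congr rfl fun c _ => percl c, Finset.sum_sub_distrib]
    rw [Finset.sum_neg_distrib, ← Finset.sum_smul, ← hP, ← Finset.smul_sum, ← hX]
    rw [← neg_smul, ← sub_smul]
    congr 1
    ring
  have h2 : Z1 * X = X * Z1 - Z2 := by rw [← hXZ1]; abel
  have h3 : Z2 * X = X * Z2 := by rw [hZ2, smul_mul_assoc, mul_smul_comm]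
  -- conjugation
  have key := mul_exp_eq_aux X Y Z1 Z2 h1 h2 h3
  have hconj : NormedSpace.exp (-X) * Y * NormedSpace.exp X
      = Y - Z1 + (2⁻¹ : ℝ) • Z2 := by
    rw [mul_assoc, key, ← mul_assoc, ← NormedSpace.exp_add_of_commute_of_mem_ball (𝕂 := ℝ) (Commute.refl X).neg_left
        ((expSeries_radius_eq_top ℝ A).symm ▸ edist_lt_top _ _)
        ((expSeries_radius_eq_top ℝ A).symm ▸ edist_lt_top _ _),
      neg_add_cancel, NormedSpace.exp_zero, one_mul]
  rw [hconj]
  -- final algebra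
  have hs0 : s ≠ 0 := by
    have : 0 < s := Finset.sum_pos (fun i _ => hα i) Finset.univ_nonempty
    exact this.ne'
  have hRHS : s • ∑ a : Fin N, ((α a.castSucc / s) • E (Fin.last N) a.castSucc
      - E a.castSucc a.castSucc)
      = (∑ a : Fin N, α a.castSucc • E (Fin.last N) a.castSucc)
        - s • (∑ a : Fin N, E a.castSucc a.castSucc) := by
    rw [Finset.smul_sum,
      Finset.sum_congr rfl fun a _ => by
        rw [smul_sub, smul_smul, mul_div_cancel₀ _ hs0],
      Finset.sum_sub_distrib, ← Finset.smul_sum]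
  rw [hRHS]
  have hYd : Y = T + (∑ A' : Fin (N + 1), α A' • E (Fin.last N) A')
      - s • (∑ B : Fin (N + 1), E B B) := by
    rw [hY, hT, hs]
    simp only [smul_sub]
    rw [Finset.sum_congr rfl fun A' (_ : A' ∈ Finset.univ) => Finset.sum_sub_distrib _ _,
      Finset.sum_sub_distrib]
    congr 1
    · rw [Finset.sum_comm (f := fun A' B => α A' • E B A'),
        Fin.sum_univ_castSucc (f := fun B => ∑ A' : Fin (N + 1), α A' • E B A')]
    · rw [Finset.sum_comm (f := fun A' B => α A' • E B B), Finset.smul_sum]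
      exact Finset.sum_congr rfl fun B _ => (Finset.sum_smul).symm
  have hSX : S - X = E (Fin.last N) (Fin.last N) := by
    rw [hS, hX, Fin.sum_univ_castSucc (f := fun B => E B (Fin.last N))]
    abel
  have hQ : (∑ A' : Fin (N + 1), α A' • E (Fin.last N) A')
      = (∑ a : Fin N, α a.castSucc • E (Fin.last N) a.castSucc)
        + α (Fin.last N) • E (Fin.last N) (Fin.last N) :=
    Fin.sum_univ_castSucc (f := fun A' => α A' • E (Fin.last N) A')
  have hD : (∑ B : Fin (N + 1), E B B)
      = (∑ a : Fin N, E a.castSucc a.castSucc) + E (Fin.last N) (Fin.last N) :=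
    Fin.sum_univ_castSucc (f := fun B => E B B)
  have hsP : s = P + α (Fin.last N) := by
    rw [hs, hP]
    exact Fin.sum_univ_castSucc (f := α)
  have h2inv : (2⁻¹ : ℝ) • Z2 = -(P • X) := by
    rw [hZ2, smul_smul, ← neg_smul]
    congr 1
    ring
  calc Y - Z1 + (2⁻¹ : ℝ) • Z2
      = (∑ A' : Fin (N + 1), α A' • E (Fin.last N) A')
        - s • (∑ B : Fin (N + 1), E B B) + P • (S - X) := by
        rw [hYd, hZ1, h2inv, smul_sub]
        abel
    _ = (∑ a : Fin N, α a.castSucc • E (Fin.last N) a.castSucc)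
        + α (Fin.last N) • E (Fin.last N) (Fin.last N)
        - (s • (∑ a : Fin N, E a.castSucc a.castSucc)
            + s • E (Fin.last N) (Fin.last N))
        + P • E (Fin.last N) (Fin.last N) := by
        rw [hSX, hQ, hD, smul_add]
    _ = (∑ a : Fin N, α a.castSucc • E (Fin.last N) a.castSucc)
        - s • (∑ a : Fin N, E a.castSucc a.castSucc)
        + ((α (Fin.last N) + P) • E (Fin.last N) (Fin.last N)
            - s • E (Fin.last N) (Fin.last N)) := by
        rw [add_smul]
        abel
    _ = (∑ a : Fin N, α a.castSucc • E (Fin.last N) a.castSucc)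
        - s • (∑ a : Fin N, E a.castSucc a.castSucc) := by
        rw [show α (Fin.last N) + P = s by rw [hsP]; ring]
        abel
end

section
/- If the reservoir parameters are site-independent, α_A^x = α_A > 0 for all x and A, then the multispecies stirring process generator satisfies detailed balance with respect to the product of multinomial distributions μ_rev = ⊗_x Multinomial(ν; ρ_1,...,ρ_N) with ρ_A = α_A/|α|; i.e., for each edge transition swapping a type-A particle at x with a type-B particle at y, μ_rev(n) · n_A^x n_B^y = μ_rev(n − δ_A^x + δ_B^x + δ_A^y − δ_B^y) · (n_A^y + 1)(n_B^x + 1), and each site transition replacing type B by type A at rate α_A n_B^x satisfies the corresponding detailed balance equation. -/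
open scoped BigOperators
open Nat

private noncomputable def gwt (N ν : ℕ) (ρ : Fin N → ℝ) (m : Fin N → ℕ) : ℝ :=
  ((ν ! : ℝ) / ∏ C, ((m C)! : ℝ)) * ∏ C, ρ C ^ m C

private lemma prod_split {ι : Type*} [Fintype ι] [DecidableEq ι]
    (A B : ι) (hAB : A ≠ B) (f : ι → ℝ) :
    ∏ C, f C = f A * (f B * ∏ C ∈ (Finset.univ.erase A).erase B, f C) := by
  rw [← Finset.mul_prod_erase Finset.univ f (Finset.mem_univ A),
      ← Finset.mul_prod_erase _ f (Finset.mem_erase.mpr ⟨hAB.symm, Finset.mem_univ B⟩)]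

private lemma site_db (N ν : ℕ) (ρ : Fin N → ℝ) (A B : Fin N) (hAB : A ≠ B)
    (m : Fin N → ℕ) (hB : 1 ≤ m B) :
    gwt N ν ρ m * ρ A * (m B : ℝ)
      = gwt N ν ρ (fun C => if C = A then m A + 1 else if C = B then m B - 1 else m C)
        * ρ B * ((m A : ℝ) + 1) := by
  obtain ⟨k, hk⟩ : ∃ k, m B = k + 1 := ⟨m B - 1, (Nat.succ_pred_eq_of_pos hB).symm⟩
  unfold gwt
  rw [prod_split A B hAB (fun C => ((m C)! : ℝ)),
      prod_split A B hAB (fun C => ρ C ^ m C),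
      prod_split A B hAB (fun C => (((if C = A then m A + 1 else if C = B then m B - 1 else m C) : ℕ)! : ℝ)),
      prod_split A B hAB (fun C => ρ C ^ (if C = A then m A + 1 else if C = B then m B - 1 else m C))]
  have h1 : ∏ C ∈ (Finset.univ.erase A).erase B,
      (((if C = A then m A + 1 else if C = B then m B - 1 else m C) : ℕ)! : ℝ)
      = ∏ C ∈ (Finset.univ.erase A).erase B, ((m C)! : ℝ) := by
    refine Finset.prod_congr rfl fun C hC => ?_
    simp only [Finset.mem_erase] at hC
    simp [hC.1, hC.2.1]
  have h2 : ∏ C ∈ (Finset.univ.erase A).erase B,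
      ρ C ^ (if C = A then m A + 1 else if C = B then m B - 1 else m C)
      = ∏ C ∈ (Finset.univ.erase A).erase B, ρ C ^ m C := by
    refine Finset.prod_congr rfl fun C hC => ?_
    simp only [Finset.mem_erase] at hC
    simp [hC.1, hC.2.1]
  rw [h1, h2]
  simp only [if_pos rfl, if_neg hAB, if_neg hAB.symm, hk, if_true, Nat.add_sub_cancel]
  have hfA : ((m A)! : ℝ) ≠ 0 := Nat.cast_ne_zero.mpr (Nat.factorial_ne_zero _)
  have hfk : ((k)! : ℝ) ≠ 0 := Nat.cast_ne_zero.mpr (Nat.factorial_ne_zero _)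
  have hR : (∏ C ∈ (Finset.univ.erase A).erase B, ((m C)! : ℝ)) ≠ 0 :=
    Finset.prod_ne_zero_iff.mpr fun C _ => Nat.cast_ne_zero.mpr (Nat.factorial_ne_zero _)
  have eA : (((m A + 1))! : ℝ) = ((m A : ℝ) + 1) * ((m A)! : ℝ) := by
    rw [Nat.factorial_succ]; push_cast; ring
  have eB : (((k + 1))! : ℝ) = ((k : ℝ) + 1) * ((k)! : ℝ) := by
    rw [Nat.factorial_succ]; push_cast; ring
  rw [eA, eB]
  push_cast
  field_simp
  ring

/-- with site-independent reservoir parameters `α_A > 0`, the multispecies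
stirring process satisfies detailed balance with respect to the product of multinomial
distributions `μ_rev = ⊗_x Multinomial(ν; ρ_1,...,ρ_N)`, `ρ_A = α_A/|α|`.  For an edge
transition swapping a type-`A` particle at `x` with a type-`B` particle at `y`:
`μ(n) n_A^x n_B^y = μ(n − δ_A^x + δ_B^x + δ_A^y − δ_B^y) (n_A^y + 1)(n_B^x + 1)`;
and for the site transition replacing a type-`B` particle at `x` by a type-`A` one
(rate `α_A n_B^x`): `μ(n) α_A n_B^x = μ(n + δ_A^x − δ_B^x) α_B (n_A^x + 1)`. -/
theorem detailed_balance_multinomial {V : Type*} [Fintype V] [DecidableEq V]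
    (N ν : ℕ) (α : Fin N → ℝ) (hα : ∀ C, 0 < α C)
    (μ : (V → Fin N → ℕ) → ℝ)
    (hμ : ∀ m : V → Fin N → ℕ,
      μ m = ∏ x : V, (((ν ! : ℝ) / ∏ C, ((m x C)! : ℝ))
        * ∏ C, (α C / ∑ C', α C') ^ (m x C)))
    (n : V → Fin N → ℕ) (hconf : ∀ x, ∑ C, n x C = ν)
    (x y : V) (hxy : x ≠ y) (A B : Fin N) (hAB : A ≠ B) :
    ((1 ≤ n x A → 1 ≤ n y B →
      μ n * (n x A : ℝ) * (n y B : ℝ)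
        = μ (fun z C =>
            if z = x then (if C = A then n x A - 1 else if C = B then n x B + 1 else n x C)
            else if z = y then
              (if C = A then n y A + 1 else if C = B then n y B - 1 else n y C)
            else n z C)
          * ((n y A : ℝ) + 1) * ((n x B : ℝ) + 1)))
    ∧ (1 ≤ n x B →
      μ n * α A * (n x B : ℝ)
        = μ (fun z C =>
            if z = x then (if C = A then n x A + 1 else if C = B then n x B - 1 else n x C)
            else n z C)
          * α B * ((n x A : ℝ) + 1)) := by
  set S : ℝ := ∑ C', α C' with hSdef
  have hS : 0 < S := Finset.sum_pos (fun C _ => hα C) ⟨A, Finset.mem_univ A⟩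
  set ρ : Fin N → ℝ := fun C => α C / S with hρdef
  have hρpos : ∀ C, 0 < ρ C := fun C => div_pos (hα C) hS
  have hμ' : ∀ m : V → Fin N → ℕ, μ m = ∏ z : V, gwt N ν ρ (m z) := by
    intro m; rw [hμ m]; rfl
  have hαρ : ∀ C, α C = S * ρ C := by
    intro C; have := hS.ne'; simp only [hρdef]; field_simp
  constructor
  · intro hA hB
    set n' : V → Fin N → ℕ := fun z C =>
      if z = x then (if C = A then n x A - 1 else if C = B then n x B + 1 else n x C)
      else if z = y then
        (if C = A then n y A + 1 else if C = B then n y B - 1 else n y C)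
      else n z C with hn'
    have hn'x : n' x = fun C => if C = B then n x B + 1 else if C = A then n x A - 1 else n x C := by
      funext C
      by_cases h1 : C = A <;> by_cases h2 : C = B
      · exact absurd (h1.symm.trans h2) hAB
      all_goals simp [hn', h1, h2, hAB, hAB.symm]
    have hn'y : n' y = fun C => if C = A then n y A + 1 else if C = B then n y B - 1 else n y C := by
      funext C; simp [hn', hxy.symm]
    have hrest : ∏ z ∈ (Finset.univ.erase x).erase y, gwt N ν ρ (n' z)
        = ∏ z ∈ (Finset.univ.erase x).erase y, gwt N ν ρ (n z) := by
      refine Finset.prod_congr rfl fun z hz => ?_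
      simp only [Finset.mem_erase] at hz
      congr 1; funext C; simp [hn', hz.1, hz.2.1]
    have Ex := site_db N ν ρ B A hAB.symm (n x) hA
    have Ey := site_db N ν ρ A B hAB (n y) hB
    rw [← hn'x] at Ex
    rw [← hn'y] at Ey
    rw [hμ' n, hμ' n', prod_split x y hxy (fun z => gwt N ν ρ (n z)),
        prod_split x y hxy (fun z => gwt N ν ρ (n' z)), hrest]
    have hρAB : ρ A * ρ B ≠ 0 := mul_ne_zero (hρpos A).ne' (hρpos B).ne'
    apply mul_left_cancel₀ hρAB
    linear_combination (∏ z ∈ (Finset.univ.erase x).erase y, gwt N ν ρ (n z)) *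
      ((gwt N ν ρ (n' x) * ρ A * ((n x B : ℝ) + 1)) * Ey +
        (gwt N ν ρ (n y) * ρ A * (n y B : ℝ)) * Ex)
  · intro hB
    set n' : V → Fin N → ℕ := fun z C =>
      if z = x then (if C = A then n x A + 1 else if C = B then n x B - 1 else n x C)
      else n z C with hn'
    have hn'x : n' x = fun C => if C = A then n x A + 1 else if C = B then n x B - 1 else n x C := by
      funext C; simp [hn']
    have hrest : ∏ z ∈ Finset.univ.erase x, gwt N ν ρ (n' z)
        = ∏ z ∈ Finset.univ.erase x, gwt N ν ρ (n z) := by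
      refine Finset.prod_congr rfl fun z hz => ?_
      simp only [Finset.mem_erase] at hz
      congr 1; funext C; simp [hn', hz.1]
    have E := site_db N ν ρ A B hAB (n x) hB
    rw [← hn'x] at E
    rw [hμ' n, hμ' n',
        ← Finset.mul_prod_erase Finset.univ (fun z => gwt N ν ρ (n z)) (Finset.mem_univ x),
        ← Finset.mul_prod_erase Finset.univ (fun z => gwt N ν ρ (n' z)) (Finset.mem_univ x),
        hrest, hαρ A, hαρ B]
    linear_combination (S * ∏ z ∈ Finset.univ.erase x, gwt N ν ρ (n z)) * E
end

section
/- Operators X_1,...,X_N satisfying [X_a, X_b] = (α_a−β_a)X_b − (α_b−β_b)X_a transform under X̃_a = X_a − β_a(X_1+...+X_N) for a < N and X̃_N = X_1+...+X_N into operators satisfying [X̃_a, X̃_N] = (α_a − β_a) X̃_N for all a ∈ {1,...,N−1}. -/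
open scoped BigOperators

/-- operators `X_1,...,X_N` satisfying
`[X_a, X_b] = (α_a−β_a)X_b − (α_b−β_b)X_a` (with the normalization `Σα = Σβ = 1` of the
boundary rates) transform under `X̃_a = X_a − β_a (X_1+...+X_N)` for `a < N` and
`X̃_N = X_1+...+X_N` into operators satisfying `[X̃_a, X̃_N] = (α_a − β_a) X̃_N` for all
`a ∈ {1,...,N−1}`.  Indices run over `Fin (N+1)`. -/
theorem mpa_transformed_commutator {A : Type*} [Ring A] [Algebra ℝ A] (N : ℕ)
    (X : Fin (N + 1) → A) (α β : Fin (N + 1) → ℝ)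
    (hα : ∑ i, α i = 1) (hβ : ∑ i, β i = 1)
    (h : ∀ a b, ⁅X a, X b⁆ = (α a - β a) • X b - (α b - β b) • X a) :
    ∀ a : Fin N,
      ⁅X a.castSucc - β a.castSucc • ∑ i, X i, ∑ i, X i⁆
        = (α a.castSucc - β a.castSucc) • (∑ i, X i) := by
  intro a
  have e : ⁅X a.castSucc - β a.castSucc • ∑ i, X i, ∑ i, X i⁆ = ⁅X a.castSucc, ∑ i, X i⁆ := by
    rw [Ring.lie_def, Ring.lie_def, sub_mul, mul_sub, smul_mul_assoc, mul_smul_comm]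
    abel
  rw [e]
  have hsum : ⁅X a.castSucc, ∑ i, X i⁆ = ∑ i, ⁅X a.castSucc, X i⁆ := by
    simp only [Ring.lie_def, Finset.mul_sum, Finset.sum_mul, Finset.sum_sub_distrib]
  rw [hsum]
  simp only [h]
  rw [Finset.sum_sub_distrib, ← Finset.smul_sum, ← Finset.sum_smul]
  have hz : ∑ b : Fin (N+1), (α b - β b) = 0 := by
    rw [Finset.sum_sub_distrib, hα, hβ]; ring
  rw [hz, zero_smul, sub_zero]
end

section
/- Suppose X̃_a, X̃_N satisfy [X̃_a, X̃_N] = (α_a−β_a)X̃_N, and boundary functionals ⟨W| and |V⟩ satisfy X̃_a|V⟩ = (α_a−β_a)|V⟩, ⟨W|((α_a−β_a)X̃_N − X̃_a) = (α_a−β_a)⟨W|, and ⟨W|V⟩ = 1 (with α_a ≠ β_a for a chosen a). Then ⟨W| X̃_N^n |V⟩ = (n+1)! for all n ∈ ℕ. -/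
open Nat

/-- if `[X̃_a, X̃_N] = (α_a−β_a)X̃_N`, `X̃_a|V⟩ = (α_a−β_a)|V⟩`,
`⟨W|((α_a−β_a)X̃_N − X̃_a) = (α_a−β_a)⟨W|`, `⟨W|V⟩ = 1` and `α_a ≠ β_a`, then
`⟨W| X̃_N^n |V⟩ = (n+1)!` for all `n ∈ ℕ`. -/
theorem mpa_normalization {M : Type*} [AddCommGroup M] [Module ℝ M]
    (Xa XN : Module.End ℝ M) (αa βa : ℝ) (hab : αa ≠ βa)
    (hcomm : ⁅Xa, XN⁆ = (αa - βa) • XN)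
    (W : M →ₗ[ℝ] ℝ) (V : M)
    (hV : Xa V = (αa - βa) • V)
    (hW : ∀ m : M, W ((αa - βa) • XN m - Xa m) = (αa - βa) * W m)
    (hWV : W V = 1) :
    ∀ n : ℕ, W ((XN ^ n) V) = ((n + 1)! : ℝ) := by
  have hne : αa - βa ≠ 0 := sub_ne_zero.mpr hab
  have hc : Xa * XN = XN * Xa + (αa - βa) • XN := by
    rw [Ring.lie_def, sub_eq_iff_eq_add] at hcomm
    rw [hcomm]; abel
  have key : ∀ k : ℕ, Xa ((XN ^ k) V) = (((k : ℝ) + 1) * (αa - βa)) • (XN ^ k) V := by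
    intro k
    induction k with
    | zero => simpa using hV
    | succ k ih =>
        have h2 : (XN ^ (k + 1)) V = XN ((XN ^ k) V) := by
          rw [_root_.pow_succ']; rfl
        rw [h2, show Xa (XN ((XN ^ k) V)) = (Xa * XN) ((XN ^ k) V) from rfl, hc]
        simp only [LinearMap.add_apply, Module.End.mul_apply, LinearMap.smul_apply,
          Module.End.mul_apply, ih, map_smul]
        push_cast
        module
  have hrec : ∀ n : ℕ, W ((XN ^ (n + 1)) V) = ((n : ℝ) + 2) * W ((XN ^ n) V) := by
    intro n
    have h := hW ((XN ^ n) V)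
    rw [key n] at h
    have h2 : (XN ^ (n + 1)) V = XN ((XN ^ n) V) := by rw [_root_.pow_succ']; rfl
    rw [← h2, map_sub, map_smul, map_smul, smul_eq_mul, smul_eq_mul] at h
    have := mul_left_cancel₀ hne (show (αa - βa) * W ((XN ^ (n+1)) V)
        = (αa - βa) * (((n:ℝ) + 2) * W ((XN ^ n) V)) by linarith)
    exact this
  intro n
  induction n with
  | zero => simpa using hWV
  | succ n ih =>
      rw [hrec n, ih, Nat.factorial_succ (n+1)]
      push_cast
      ring
end

section
/- Under the relations [X̃_a, X̃_N] = (α_a−β_a)X̃_N and X̃_a|V⟩ = (α_a−β_a)|V⟩, for any word (τ_1,...,τ_L) ∈ {1,...,N}^L one has ⟨W| X̃_{τ_1} ··· X̃_{τ_L} |V⟩ = (1 + Σ_{x=1}^L δ_{τ_x,N})! · ∏_{x=1}^L (α_{τ_x} − β_{τ_x})^{1−δ_{τ_x,N}} (1 + Σ_{j=x}^L δ_{τ_j,N})^{1−δ_{τ_x,N}}, where by convention α_N = β_N so factors with τ_x = N contribute 1. -/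
/-!
Since `[X̃_a, X̃_N] = w_a X̃_N` with `w_a = α_a − β_a`, moving `X̃_a` through `X̃_N^k` gives
`X̃_a X̃_N^k = X̃_N^k X̃_a + k w_a X̃_N^k`, so `X̃_a X̃_N^k |V⟩ = (k + 1) w_a X̃_N^k |V⟩`.
Reading the word from the right, every letter `a ≠ N` therefore acts as the scalar
`w_a (1 + #{N's to its right})`, and the word collapses to that product of scalars times
`X̃_N^m |V⟩`, `m` the number of `N`'s; finally `⟨W|X̃_N^m|V⟩ = (m + 1)!`.
-/

open Finset
open scoped Nat

section

variable {R M : Type*} [CommRing R] [AddCommGroup M] [Module R M]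

theorem Module.End.apply_pow_apply_of_lie_eq_smul {f g : Module.End R M} {c d : R}
    (hfg : ⁅f, g⁆ = c • g) {v : M} (hv : f v = d • v) (k : ℕ) :
    f ((g ^ k) v) = (d + k * c) • (g ^ k) v := by
  have hswap : ∀ u : M, f (g u) = g (f u) + c • g u := by
    intro u
    have h := LinearMap.congr_fun hfg u
    simp only [Ring.lie_def, LinearMap.sub_apply, Module.End.mul_apply,
      LinearMap.smul_apply] at h
    rw [← h, add_sub_cancel]
  induction k with
  | zero => simpa using hv
  | succ k ih =>
    rw [pow_succ', Module.End.mul_apply, hswap, ih, map_smul, ← add_smul]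
    push_cast
    ring_nf

theorem list_ofFn_prod_apply_eq_smul_pow_apply {ι : Type*} [DecidableEq ι]
    (f : ι → Module.End R M) (w : ι → R) (n : ι) (v : M)
    (hcomm : ∀ a, a ≠ n → ⁅f a, f n⁆ = w a • f n) (hv : ∀ a, a ≠ n → f a v = w a • v) {L : ℕ} (τ : Fin L → ι) :
    (List.ofFn fun x => f (τ x)).prod v =
      (∏ x, if τ x = n then 1 else w (τ x) * (1 + #{j | x ≤ j ∧ τ j = n})) •
        (f n ^ #{x | τ x = n}) v := by
  induction L with
  | zero => simp
  | succ L ih =>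
    have hsuffix (x : Fin L) :
        #{j | x.succ ≤ j ∧ τ j = n} = #{j : Fin L | x ≤ j ∧ τ j.succ = n} := by
      simp [Fin.card_filter_univ_succ (fun j => x.succ ≤ j ∧ τ j = n), Fin.succ_le_succ_iff]
    simp only [List.ofFn_succ, List.prod_cons, Module.End.mul_apply, ih, map_smul,
      Fin.prod_univ_succ, hsuffix, Fin.zero_le, true_and, Fin.card_filter_univ_succ
        (fun x => τ x = n)]
    by_cases h0 : τ 0 = n
    · simp [h0, pow_succ', Module.End.mul_apply]
    · simp only [h0, if_false, Module.End.apply_pow_apply_of_lie_eq_smul (hcomm _ h0) (hv _ h0),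
        smul_smul]
      congr 1
      ring

end

theorem mpa_word_formula_general (N L : ℕ) {M : Type*} [AddCommGroup M] [Module ℝ M]
    (X : Fin (N + 1) → Module.End ℝ M) (α β : Fin (N + 1) → ℝ)
    (W : M →ₗ[ℝ] ℝ) (V : M)
    (hcomm : ∀ a : Fin (N + 1),
      ⁅X a, X (Fin.last N)⁆ = (α a - β a) • X (Fin.last N))
    (hV : ∀ a : Fin N, X a.castSucc V = (α a.castSucc - β a.castSucc) • V)
    (hW : ∀ n : ℕ, W ((X (Fin.last N) ^ n) V) = ((n + 1)! : ℝ))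
    (τ : Fin L → Fin (N + 1)) :
    W (((List.ofFn fun x => X (τ x)).prod) V)
      = (((1 + (Finset.univ.filter fun x : Fin L => τ x = Fin.last N).card)! : ℕ) : ℝ)
        * ∏ x : Fin L,
            ((α (τ x) - β (τ x)) ^ (if τ x = Fin.last N then 0 else 1)
              * ((1 + (Finset.univ.filter
                    fun j : Fin L => x ≤ j ∧ τ j = Fin.last N).card : ℕ) : ℝ)
                ^ (if τ x = Fin.last N then 0 else 1)) := by
  have hV' (a : Fin (N + 1)) (ha : a ≠ Fin.last N) : X a V = (α a - β a) • V := by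
    obtain ⟨b, rfl⟩ := Fin.exists_castSucc_eq.mpr ha
    exact hV b
  rw [list_ofFn_prod_apply_eq_smul_pow_apply X (fun a => α a - β a) (Fin.last N) V
    (fun a _ => hcomm a) hV', map_smul, hW, smul_eq_mul, mul_comm, add_comm 1]
  congr 1
  refine Finset.prod_congr rfl fun x _ => ?_
  split_ifs <;> simp

/-- under the relations `[X̃_a, X̃_N] = (α_a−β_a)X̃_N` and
`X̃_a|V⟩ = (α_a−β_a)|V⟩` (for `a < N`), together with the matrix-product normalization
`⟨W|X̃_N^n|V⟩ = (n+1)!`, for any word `(τ_1,...,τ_L) ∈ {1,...,N}^L` one has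
`⟨W| X̃_{τ_1} ⋯ X̃_{τ_L} |V⟩
  = (1 + Σ_x δ_{τ_x,N})! ∏_x ((α_{τ_x}−β_{τ_x})(1 + Σ_{j≥x} δ_{τ_j,N}))^{1−δ_{τ_x,N}}`,
with the convention `α_N = β_N` (so factors with `τ_x = N` contribute `1`).
The index set `{1,...,N}` is `Fin (N+1)` with `N` the element `Fin.last N`. -/
theorem mpa_word_formula (N L : ℕ) {M : Type*} [AddCommGroup M] [Module ℝ M]
    (X : Fin (N + 1) → Module.End ℝ M) (α β : Fin (N + 1) → ℝ)
    (hNN : α (Fin.last N) = β (Fin.last N))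
    (W : M →ₗ[ℝ] ℝ) (V : M)
    (hcomm : ∀ a : Fin (N + 1),
      ⁅X a, X (Fin.last N)⁆ = (α a - β a) • X (Fin.last N))
    (hV : ∀ a : Fin N, X a.castSucc V = (α a.castSucc - β a.castSucc) • V)
    (hW : ∀ n : ℕ, W ((X (Fin.last N) ^ n) V) = ((n + 1)! : ℝ))
    (τ : Fin L → Fin (N + 1)) :
    W (((List.ofFn fun x => X (τ x)).prod) V)
      = (((1 + (Finset.univ.filter fun x : Fin L => τ x = Fin.last N).card)! : ℕ) : ℝ)
        * ∏ x : Fin L,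
            ((α (τ x) - β (τ x)) ^ (if τ x = Fin.last N then 0 else 1)
              * ((1 + (Finset.univ.filter
                    fun j : Fin L => x ≤ j ∧ τ j = Fin.last N).card : ℕ) : ℝ)
                ^ (if τ x = Fin.last N then 0 else 1)) :=
  mpa_word_formula_general N L X α β W V hcomm hV hW τ
end

section
/- The unique bounded solution of the discrete boundary value problem ΔP(x) = 0 for 2 ≤ x ≤ L−1 (discrete Laplacian Δ P(x) = P(x+1)+P(x−1)−2P(x)), with boundary conditions P(1) = |α|/(1+|α|) + P(2)/(1+|α|) and P(L) = P(L−1)/(1+|β|), is P(x) = [|α|(L|β| − |β|x + 1) ] / (|α||β|L − |α||β| + |α| + |β|). -/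
/-- the unique solution of the discrete boundary value problem
`ΔP(x) = P(x+1) + P(x−1) − 2P(x) = 0` for `2 ≤ x ≤ L−1`, with boundary conditions
`P(1) = |α|/(1+|α|) + P(2)/(1+|α|)` and `P(L) = P(L−1)/(1+|β|)`, is
`P(x) = |α|(L|β| − |β|x + 1) / (|α||β|L − |α||β| + |α| + |β|)`:
the displayed function satisfies all three conditions, and any solution agrees with it
on `{1,...,L}`. -/
theorem absorption_probability_bvp (L : ℕ) (hL : 2 ≤ L) (a b : ℝ)
    (ha : 0 < a) (hb : 0 < b) (f : ℕ → ℝ)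
    (hf : ∀ x : ℕ, f x
      = a * ((L : ℝ) * b - b * (x : ℝ) + 1) / (a * b * (L : ℝ) - a * b + a + b)) :
    ((∀ x : ℕ, 2 ≤ x → x ≤ L - 1 → f (x + 1) + f (x - 1) - 2 * f x = 0)
      ∧ f 1 = a / (1 + a) + f 2 / (1 + a)
      ∧ f L = f (L - 1) / (1 + b))
    ∧ ∀ P : ℕ → ℝ,
        (∀ x : ℕ, 2 ≤ x → x ≤ L - 1 → P (x + 1) + P (x - 1) - 2 * P x = 0) →
        P 1 = a / (1 + a) + P 2 / (1 + a) →
        P L = P (L - 1) / (1 + b) →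
        ∀ x : ℕ, 1 ≤ x → x ≤ L → P x = f x := by
  have hL' : (2:ℝ) ≤ (L:ℝ) := by exact_mod_cast hL
  have hD : 0 < a * b * (L : ℝ) - a * b + a + b := by nlinarith [mul_pos ha hb]
  have hD' : a * b * (L : ℝ) - a * b + a + b ≠ 0 := ne_of_gt hD
  have ha1 : (1 : ℝ) + a ≠ 0 := by positivity
  have hb1 : (1 : ℝ) + b ≠ 0 := by positivity
  have hLm : ((L - 1 : ℕ) : ℝ) = (L:ℝ) - 1 := by
    have : 1 ≤ L := by omega
    push_cast [this]; ring
  constructor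
  · refine ⟨?_, ?_, ?_⟩
    · intro x hx2 hxL
      have h1 : ((x - 1 : ℕ) : ℝ) = (x:ℝ) - 1 := by
        have : 1 ≤ x := by omega
        push_cast [this]; ring
      rw [hf (x+1), hf (x-1), hf x, h1]
      push_cast
      field_simp
      ring
    · rw [hf 1, hf 2]
      push_cast
      have hD2 : a * (b * ((L:ℝ) - 1) + 1) + b ≠ 0 := by rw [show a * (b * ((L:ℝ) - 1) + 1) + b = a * b * (L : ℝ) - a * b + a + b by ring]; exact hD'
      field_simp
      ring
    · rw [hf L, hf (L-1), hLm]
      field_simp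
      ring
  · intro P hlap h1 h2 x hx1 hxL
    set d := P 2 - P 1 with hd
    have key : ∀ y : ℕ, 1 ≤ y → y ≤ L → P y = P 1 + ((y:ℝ)-1) * d := by
      intro y
      induction y using Nat.strong_induction_on with
      | _ y ih =>
        match y with
        | 0 => intro h _; omega
        | 1 => intro _ _; push_cast; ring
        | 2 => intro _ _; push_cast; rw [hd]; ring
        | (k+3) =>
          intro _ hyL
          have hrec := hlap (k+2) (by omega) (by omega)
          have hone : k + 2 - 1 = k + 1 := by omega
          rw [hone] at hrec
          have e1 := ih (k+2) (by omega) (by omega) (by omega)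
          have e2 := ih (k+1) (by omega) (by omega) (by omega)
          push_cast at e1 e2 ⊢
          linarith
    -- boundary equations
    have hP2 : P 2 = P 1 + ((2:ℝ)-1) * d := by rw [hd]; ring
    have hE1 : d = a * P 1 - a := by
      field_simp at h1
      rw [hd]; linarith
    have hEL := key L (by omega) le_rfl
    have hELm := key (L-1) (by omega) (by omega)
    rw [hLm] at hELm
    rw [hEL, hELm] at h2
    have hE2 : b * P 1 + d * (b * ((L:ℝ) - 1) + 1) = 0 := by
      field_simp at h2
      nlinarith [h2]
    have hP1 : P 1 * (a * b * (L : ℝ) - a * b + a + b) = a * (b * (L:ℝ) - b + 1) := by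
      nlinarith [hE1, hE2]
    have hdD : d * (a * b * (L : ℝ) - a * b + a + b) = -(a * b) := by
      nlinarith [hE1, hE2, hP1]
    rw [key x hx1 hxL, hf x]
    rw [eq_div_iff hD']
    linear_combination hP1 + ((x:ℝ) - 1) * hdD
end

section
/- Let h_c : {1,...,N} → {1,...,N} for c ∈ {1,...,N−2} be defined by h_c(A) = A+c if A+c < N, h_c(A) = A+c−N+1 if A+c ≥ N and A ≠ N, and h_c(N) = N. Then h_c is a bijection of {1,...,N} fixing N, and consequently, in gl(N)⊗gl(N), [ Σ_{a,b=1}^{N−1} E_{aN}⊗E_{bN} , Σ_{A,B=1}^{N} ( E_{h_c(A)B} ⊗ E_{h_c(B)A} − E_{BB} ⊗ E_{AA} ) ] = 0. -/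
open scoped BigOperators Kronecker
open Matrix

namespace Stmt19Aux

variable {n : ℕ}

/-- The matrix `P = ∑_{a<N} E_{aN}`. -/
noncomputable def Pm (n : ℕ) : Matrix (Fin (n+1)) (Fin (n+1)) ℂ :=
  ∑ a : Fin n, Matrix.single a.castSucc (Fin.last n) 1

lemma sum_kron {ι : Type*} (s : Finset ι) (f : ι → Matrix (Fin (n+1)) (Fin (n+1)) ℂ)
    (B : Matrix (Fin (n+1)) (Fin (n+1)) ℂ) :
    (∑ i ∈ s, f i) ⊗ₖ B = ∑ i ∈ s, f i ⊗ₖ B := by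
  ext ⟨i1, i2⟩ ⟨j1, j2⟩
  simp [Matrix.kroneckerMap_apply, Matrix.sum_apply, Finset.sum_mul]

lemma kron_sum {ι : Type*} (s : Finset ι) (A : Matrix (Fin (n+1)) (Fin (n+1)) ℂ)
    (f : ι → Matrix (Fin (n+1)) (Fin (n+1)) ℂ) :
    A ⊗ₖ (∑ i ∈ s, f i) = ∑ i ∈ s, A ⊗ₖ f i := by
  ext ⟨i1, i2⟩ ⟨j1, j2⟩
  simp [Matrix.kroneckerMap_apply, Matrix.sum_apply, Finset.mul_sum]

lemma kron_sum_sum (f g : Fin n → Matrix (Fin (n+1)) (Fin (n+1)) ℂ) :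
    ∑ a : Fin n, ∑ b : Fin n, f a ⊗ₖ g b = (∑ a : Fin n, f a) ⊗ₖ (∑ b : Fin n, g b) := by
  rw [sum_kron]
  exact Finset.sum_congr rfl fun a _ => (kron_sum _ _ _).symm

lemma kron_sum_sum' (f g : Fin n → Matrix (Fin (n+1)) (Fin (n+1)) ℂ) :
    ∑ a : Fin n, ∑ b : Fin n, f b ⊗ₖ g a = (∑ b : Fin n, f b) ⊗ₖ (∑ a : Fin n, g a) := by
  rw [Finset.sum_comm]
  exact kron_sum_sum f g

lemma my_mul_kron (A B C D : Matrix (Fin (n+1)) (Fin (n+1)) ℂ) :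
    (A ⊗ₖ B) * (C ⊗ₖ D) = (A*C) ⊗ₖ (B*D) := (Matrix.mul_kronecker_mul A C B D).symm

lemma Pm_mul_std (C D : Fin (n+1)) :
    Pm n * Matrix.single C D 1 =
      if C = Fin.last n then ∑ a : Fin n, Matrix.single a.castSucc D 1 else 0 := by
  unfold Pm
  rw [Finset.sum_mul]
  split_ifs with hC
  · subst hC
    refine Finset.sum_congr rfl fun a _ => ?_
    rw [Matrix.single_mul_single_same, one_mul]
  · refine Finset.sum_eq_zero fun a _ => ?_
    apply Matrix.single_mul_single_of_ne
    exact Ne.symm hC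

lemma std_mul_Pm (C D : Fin (n+1)) :
    Matrix.single C D 1 * Pm n =
      if D = Fin.last n then 0 else Matrix.single C (Fin.last n) 1 := by
  unfold Pm
  rw [Finset.mul_sum]
  split_ifs with hD
  · refine Finset.sum_eq_zero fun a _ => ?_
    apply Matrix.single_mul_single_of_ne
    rw [hD]
    exact (Fin.castSucc_lt_last a).ne'
  · rw [Finset.sum_eq_single (D.castPred hD)]
    · rw [Fin.castSucc_castPred, Matrix.single_mul_single_same, one_mul]
    · intro a _ ha
      apply Matrix.single_mul_single_of_ne
      intro hh
      apply ha
      subst hh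
      simp [Fin.castPred_castSucc]
    · intro hmem
      exact absurd (Finset.mem_univ _) hmem

end Stmt19Aux

open Stmt19Aux

/-- for `c ∈ {1,...,N−2}`, the map `h_c : {1,...,N} → {1,...,N}` given by
`h_c(A) = A+c` if `A+c < N`, `h_c(A) = A+c−N+1` if `A+c ≥ N` and `A ≠ N`, and
`h_c(N) = N`, is a bijection fixing `N`; consequently, in `gl(N) ⊗ gl(N)` (realized by
matrix units and Kronecker products),
`[ Σ_{a,b<N} E_{aN}⊗E_{bN} , Σ_{A,B} (E_{h_c(A)B}⊗E_{h_c(B)A} − E_{BB}⊗E_{AA}) ] = 0`.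
Here `{1,...,N}` is `Fin (n+1)` (so `N = n+1`), `N` is `Fin.last n`, and the condition
`A+c < N` reads `(A : ℕ) + c < n` in the 0-indexed encoding. -/
theorem hmap_bijective_and_commutator (n c : ℕ) (hc1 : 1 ≤ c) (hc2 : c ≤ n - 1) :
    let h : Fin (n + 1) → Fin (n + 1) := fun A =>
      if A = Fin.last n then Fin.last n
      else if hlt : (A : ℕ) + c < n then ⟨(A : ℕ) + c, by omega⟩
      else ⟨(A : ℕ) + c - n, by have := A.isLt; omega⟩
    Function.Bijective h
    ∧ h (Fin.last n) = Fin.last n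
    ∧ (∑ a : Fin n, ∑ b : Fin n,
          Matrix.single a.castSucc (Fin.last n) (1 : ℂ)
            ⊗ₖ Matrix.single b.castSucc (Fin.last n) (1 : ℂ))
        * (∑ A : Fin (n + 1), ∑ B : Fin (n + 1),
            (Matrix.single (h A) B (1 : ℂ) ⊗ₖ Matrix.single (h B) A (1 : ℂ)
              - Matrix.single B B (1 : ℂ) ⊗ₖ Matrix.single A A (1 : ℂ)))
      = (∑ A : Fin (n + 1), ∑ B : Fin (n + 1),
            (Matrix.single (h A) B (1 : ℂ) ⊗ₖ Matrix.single (h B) A (1 : ℂ)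
              - Matrix.single B B (1 : ℂ) ⊗ₖ Matrix.single A A (1 : ℂ)))
        * (∑ a : Fin n, ∑ b : Fin n,
            Matrix.single a.castSucc (Fin.last n) (1 : ℂ)
              ⊗ₖ Matrix.single b.castSucc (Fin.last n) (1 : ℂ)) := by
  intro h
  have hn2 : 2 ≤ n := by omega
  have hfix : h (Fin.last n) = Fin.last n := by simp [h]
  have hvne : ∀ A : Fin (n+1), A ≠ Fin.last n → (A : ℕ) ≠ n := by
    intro A hA hv
    exact hA (Fin.ext (by rw [hv, Fin.val_last]))
  have hne : ∀ A : Fin (n+1), A ≠ Fin.last n → h A ≠ Fin.last n := by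
    intro A hA hEq
    have hAv := hvne A hA
    have hlt := A.isLt
    simp only [h, if_neg hA] at hEq
    split_ifs at hEq with hcase <;>
      · have := congrArg Fin.val hEq
        simp only [Fin.val_last] at this
        omega
  have hinj : Function.Injective h := by
    intro A B hAB
    by_cases hA : A = Fin.last n <;> by_cases hB : B = Fin.last n
    · rw [hA, hB]
    · exfalso; apply hne B hB; rw [← hAB, hA, hfix]
    · exfalso; apply hne A hA; rw [hAB, hB, hfix]
    · have hAv := hvne A hA
      have hBv := hvne B hB
      have h1 := A.isLt
      have h2 := B.isLt
      simp only [h, if_neg hA, if_neg hB] at hAB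
      apply Fin.ext
      split_ifs at hAB <;> (rw [Fin.mk.injEq] at hAB; omega)
  have hbij : Function.Bijective h := Finite.injective_iff_bijective.mp hinj
  have hcsne : ∀ a : Fin n, a.castSucc ≠ Fin.last n := fun a => (Fin.castSucc_lt_last a).ne
  -- reindexing: summing the matrix units over the image of h (off N) gives Pm
  have hPre : (∑ a : Fin n, Matrix.single (h a.castSucc) (Fin.last n) (1 : ℂ)) = Pm n := by
    have hg : Function.Bijective
        (fun a : Fin n => (h a.castSucc).castPred (hne _ (hcsne a))) := by
      apply Finite.injective_iff_bijective.mp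
      intro x y hxy
      have : h x.castSucc = h y.castSucc := by
        have := congrArg Fin.castSucc hxy
        rwa [Fin.castSucc_castPred, Fin.castSucc_castPred] at this
      exact Fin.castSucc_injective _ (hinj this)
    exact Fintype.sum_bijective _ hg _ _
      (fun a => by rw [Fin.castSucc_castPred])
  have hXeq : (∑ a : Fin n, ∑ b : Fin n,
      Matrix.single a.castSucc (Fin.last n) (1 : ℂ)
        ⊗ₖ Matrix.single b.castSucc (Fin.last n) (1 : ℂ)) = Pm n ⊗ₖ Pm n := by
    rw [kron_sum_sum]; rfl
  -- the four product computations
  have hXS : (Pm n ⊗ₖ Pm n) *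
      (∑ A : Fin (n + 1), ∑ B : Fin (n + 1),
        Matrix.single (h A) B (1 : ℂ) ⊗ₖ Matrix.single (h B) A (1 : ℂ))
      = Pm n ⊗ₖ Pm n := by
    simp only [Finset.mul_sum, my_mul_kron, Pm_mul_std]
    rw [Finset.sum_eq_single (Fin.last n)]
    · rw [Finset.sum_eq_single (Fin.last n)]
      · rw [hfix]
        simp [Pm]
      · intro B _ hB
        rw [if_neg (hne B hB), kronecker_zero]
      · intro hmem; exact absurd (Finset.mem_univ _) hmem
    · intro A _ hA
      refine Finset.sum_eq_zero fun B _ => ?_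
      rw [if_neg (hne A hA), zero_kronecker]
    · intro hmem; exact absurd (Finset.mem_univ _) hmem
  have hXT : (Pm n ⊗ₖ Pm n) *
      (∑ A : Fin (n + 1), ∑ B : Fin (n + 1),
        Matrix.single B B (1 : ℂ) ⊗ₖ Matrix.single A A (1 : ℂ))
      = Pm n ⊗ₖ Pm n := by
    simp only [Finset.mul_sum, my_mul_kron, Pm_mul_std]
    rw [Finset.sum_eq_single (Fin.last n)]
    · rw [Finset.sum_eq_single (Fin.last n)]
      · simp [Pm]
      · intro B _ hB
        rw [if_neg hB, zero_kronecker]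
      · intro hmem; exact absurd (Finset.mem_univ _) hmem
    · intro A _ hA
      refine Finset.sum_eq_zero fun B _ => ?_
      rw [if_neg hA, kronecker_zero]
    · intro hmem; exact absurd (Finset.mem_univ _) hmem
  have hSX : (∑ A : Fin (n + 1), ∑ B : Fin (n + 1),
        Matrix.single (h A) B (1 : ℂ) ⊗ₖ Matrix.single (h B) A (1 : ℂ))
      * (Pm n ⊗ₖ Pm n) = Pm n ⊗ₖ Pm n := by
    simp only [Finset.sum_mul, my_mul_kron, std_mul_Pm]
    simp only [Fin.sum_univ_castSucc]
    have hcsne' : ∀ a : Fin n, ¬ (a.castSucc = Fin.last n) := hcsne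
    simp only [hcsne', if_neg, if_pos, ite_true, ite_false, if_true, if_false,
      reduceIte, zero_kronecker, kronecker_zero, add_zero, Finset.sum_const_zero]
    rw [kron_sum_sum, hPre]
  have hTX : (∑ A : Fin (n + 1), ∑ B : Fin (n + 1),
        Matrix.single B B (1 : ℂ) ⊗ₖ Matrix.single A A (1 : ℂ))
      * (Pm n ⊗ₖ Pm n) = Pm n ⊗ₖ Pm n := by
    simp only [Finset.sum_mul, my_mul_kron, std_mul_Pm]
    simp only [Fin.sum_univ_castSucc]
    have hcsne' : ∀ a : Fin n, ¬ (a.castSucc = Fin.last n) := hcsne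
    simp only [hcsne', if_neg, if_pos, ite_true, ite_false, if_true, if_false,
      reduceIte, zero_kronecker, kronecker_zero, add_zero, Finset.sum_const_zero]
    rw [kron_sum_sum']
    rfl
  refine ⟨hbij, hfix, ?_⟩
  have hsplit : (∑ A : Fin (n + 1), ∑ B : Fin (n + 1),
      (Matrix.single (h A) B (1 : ℂ) ⊗ₖ Matrix.single (h B) A (1 : ℂ)
        - Matrix.single B B (1 : ℂ) ⊗ₖ Matrix.single A A (1 : ℂ)))
      = (∑ A : Fin (n + 1), ∑ B : Fin (n + 1),
          Matrix.single (h A) B (1 : ℂ) ⊗ₖ Matrix.single (h B) A (1 : ℂ))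
        - (∑ A : Fin (n + 1), ∑ B : Fin (n + 1),
          Matrix.single B B (1 : ℂ) ⊗ₖ Matrix.single A A (1 : ℂ)) := by
    simp only [Finset.sum_sub_distrib]
  rw [hXeq, hsplit, mul_sub, sub_mul, hXS, hXT, hSX, hTX]
end
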